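/- arXiv:1607.01741 — 2 statements merged into one kernel-verified Lean document; each statement's English description precedes it below -/
import Mathlib

section
/- Let m be a natural number and let u, v : ℝⁿ → ℂ be Schwartz functions. Then ∫_{ℝⁿ} (1+|ξ|²)^m û(ξ) conj(v̂(ξ)) dξ = Σ_{α ∈ ℕ₀ⁿ, |α| ≤ m} C(m,|α|) · (|α|! / (α₁!⋯αₙ!)) · ∫_{ℝⁿ} (∂^α u)(x) · conj((∂^α v)(x)) dx, where C(m,k) is the binomial coefficient, |α| = α₁ + ⋯ + αₙ, and ∂^α denotes the mixed partial derivative of order α. -/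
open MeasureTheory

/-- The Fourier transform with the convention `f̂(ξ) = (2π)^{-n/2} ∫ e^{-i ξ·x} f(x) dx`. -/
noncomputable def ft {n : ℕ} (f : EuclideanSpace ℝ (Fin n) → ℂ)
    (ξ : EuclideanSpace ℝ (Fin n)) : ℂ :=
  (((2 * Real.pi) ^ (-(n : ℝ) / 2) : ℝ) : ℂ) *
    ∫ x, Complex.exp (-(Complex.I * ((inner ℝ ξ x : ℝ) : ℂ))) * f x

/-- The partial derivative `∂f/∂xᵢ`. -/
noncomputable def pd {n : ℕ} (i : Fin n) (f : EuclideanSpace ℝ (Fin n) → ℂ) :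
    EuclideanSpace ℝ (Fin n) → ℂ :=
  fun x => fderiv ℝ f x (EuclideanSpace.single i 1)

/-- The mixed partial derivative `∂^α f = ∂^{|α|} f / ∂x₁^{α₁} ⋯ ∂xₙ^{αₙ}`
for a multi-index `α`. -/
noncomputable def mderiv {n : ℕ} (α : Fin n → ℕ) (f : EuclideanSpace ℝ (Fin n) → ℂ) :
    EuclideanSpace ℝ (Fin n) → ℂ :=
  (List.finRange n).foldr (fun i g => (pd i)^[α i] g) f

open Real Complex SchwartzMap FourierTransform ComplexConjugate LineDeriv

/-! Expanding the weight by the binomial and multinomial theorems gives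
`(1 + ‖ξ‖²)^m = ∑_α C(m, |α|) (|α|! / α!) ξ^{2α}`. Since `ft` turns `∂^α` into multiplication by
`(iξ)^α`, the term `ξ^{2α} ft u · conj (ft v)` equals `ft (∂^α u) · conj (ft (∂^α v))`, and
Parseval's identity for `ft` (Plancherel for Mathlib's `𝓕` after the change of variables
`ξ ↦ 2πξ`) turns its integral into `∫ ∂^α u · conj (∂^α v)`. -/

section Multinomial

variable {ι R : Type*} [Fintype ι] [DecidableEq ι] [CommSemiring R]

lemma filter_piFinset_range_sum_eq_piAntidiag {m k : ℕ} (hk : k ≤ m) :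
    {α ∈ (Fintype.piFinset fun _ : ι => Finset.range (m + 1)).filter (fun α => ∑ i, α i ≤ m) |
      ∑ i, α i = k} = Finset.piAntidiag Finset.univ k := by
  ext α
  simp only [Finset.mem_filter, Fintype.mem_piFinset, Finset.mem_range, Nat.lt_succ_iff,
    Finset.mem_piAntidiag, Finset.mem_univ, implies_true, and_true]
  constructor
  · exact fun h => h.2
  · rintro rfl
    refine ⟨⟨fun i => le_trans ?_ hk, hk⟩, rfl⟩
    exact Finset.single_le_sum (fun j _ => Nat.zero_le (α j)) (Finset.mem_univ i)

theorem one_add_sum_pow_eq_sum_multinomial (m : ℕ) (x : ι → R) :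
    (1 + ∑ i, x i) ^ m =
      ∑ α ∈ (Fintype.piFinset fun _ : ι => Finset.range (m + 1)).filter (fun α => ∑ i, α i ≤ m),
        ((m.choose (∑ i, α i) * Nat.multinomial Finset.univ α : ℕ) : R) * ∏ i, x i ^ α i := by
  rw [add_comm, add_pow, ← Finset.sum_fiberwise_of_maps_to (t := Finset.range (m + 1))
    (g := fun α : ι → ℕ => ∑ i, α i)
    fun α hα => Finset.mem_range.2 (Nat.lt_succ_of_le (Finset.mem_filter.1 hα).2)]
  refine Finset.sum_congr rfl fun k hk => ?_
  rw [filter_piFinset_range_sum_eq_piAntidiag (Nat.lt_succ_iff.1 (Finset.mem_range.1 hk)),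
    Finset.sum_pow_eq_sum_piAntidiag, Finset.sum_mul, Finset.sum_mul]
  refine Finset.sum_congr rfl fun α hα => ?_
  rw [(Finset.mem_piAntidiag.1 hα).1]
  push_cast
  ring

end Multinomial

lemma SchwartzMap.integrable_mul_conj {D : Type*} [NormedAddCommGroup D] [NormedSpace ℝ D]
    [MeasurableSpace D] [BorelSpace D] [SecondCountableTopology D] {μ : Measure D}
    [μ.HasTemperateGrowth] (f g : 𝓢(D, ℂ)) :
    Integrable (fun x => f x * conj (g x)) μ :=
  (g.integrable.norm.mono' (by fun_prop) (by simp)).bdd_mul (by fun_prop)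
    (Filter.Eventually.of_forall fun x => f.toBoundedContinuousFunction.norm_coe_le_norm x)

section Fourier

variable {V : Type*} [NormedAddCommGroup V] [InnerProductSpace ℝ V] [FiniteDimensional ℝ V]
  [MeasurableSpace V] [BorelSpace V]

lemma SchwartzMap.integral_fourier_mul_conj_fourier (f g : 𝓢(V, ℂ)) :
    ∫ ξ, 𝓕 ⇑f ξ * conj (𝓕 ⇑g ξ) = ∫ x, f x * conj (g x) := by
  simpa [← fourier_coe, RCLike.inner_apply] using integral_inner_fourier_fourier g f

lemma SchwartzMap.fourier_lineDerivOp_apply (f : 𝓢(V, ℂ)) (m ξ : V) :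
    𝓕 ⇑(∂_{m} f : 𝓢(V, ℂ)) ξ = 2 * π * I * inner ℝ ξ m * 𝓕 ⇑f ξ := by
  have hm : (inner ℝ · m).HasTemperateGrowth := ((innerSL ℝ).flip m).hasTemperateGrowth
  rw [← fourier_coe, fourier_lineDerivOp_eq, _root_.smul_apply,
    smulLeftCLM_apply_apply hm, fourier_coe]
  simp only [smul_eq_mul, Complex.real_smul]
  ring

end Fourier

lemma rpow_neg_div_two_sq {x : ℝ} (hx : 0 ≤ x) (n : ℕ) :
    (x ^ (-(n : ℝ) / 2)) ^ 2 = (x ^ n)⁻¹ := by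
  rw [← Real.rpow_mul_natCast hx, ← Real.rpow_natCast, ← Real.rpow_neg hx]
  norm_num

section EuclideanSpace

variable {n : ℕ}

local notation "𝕍" => EuclideanSpace ℝ (Fin n)

lemma ft_eq_fourier (f : 𝕍 → ℂ) (ξ : 𝕍) :
    ft f ξ = (((2 * π) ^ (-(n : ℝ) / 2) : ℝ) : ℂ) * 𝓕 f ((2 * π)⁻¹ • ξ) := by
  rw [ft, Real.fourier_eq']
  congr 1
  refine integral_congr_ae (Filter.Eventually.of_forall fun x => ?_)
  have hphase : -2 * π * inner ℝ x ((2 * π)⁻¹ • ξ) = -inner ℝ ξ x := by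
    rw [real_inner_comm, real_inner_smul_left]
    field_simp
  simp only [hphase, smul_eq_mul]
  push_cast
  ring_nf

lemma ft_mul_conj_ft_eq (f g : 𝕍 → ℂ) (ξ : 𝕍) :
    ft f ξ * conj (ft g ξ) =
      (((2 * π) ^ n)⁻¹ : ℝ) • (fun w => 𝓕 f w * conj (𝓕 g w)) ((2 * π)⁻¹ • ξ) := by
  rw [ft_eq_fourier, ft_eq_fourier, ← rpow_neg_div_two_sq (by positivity), map_mul,
    Complex.conj_ofReal, Complex.real_smul]
  push_cast
  ring

lemma integrable_ft_mul_conj_ft (f g : 𝓢(𝕍, ℂ)) :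
    Integrable fun ξ => ft f ξ * conj (ft g ξ) := by
  have h2π : (2 * π)⁻¹ ≠ 0 := by positivity
  simp only [ft_mul_conj_ft_eq]
  exact (((𝓕 f).integrable_mul_conj (𝓕 g)).comp_smul h2π).smul (((2 * π) ^ n)⁻¹ : ℝ)

lemma integral_ft_mul_conj_ft (f g : 𝓢(𝕍, ℂ)) :
    ∫ ξ, ft f ξ * conj (ft g ξ) = ∫ x, f x * conj (g x) := by
  rw [funext (ft_mul_conj_ft_eq ⇑f ⇑g), integral_smul,
    Measure.integral_comp_smul volume (fun w => 𝓕 ⇑f w * conj (𝓕 ⇑g w)),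
    finrank_euclideanSpace_fin, smul_smul, integral_fourier_mul_conj_fourier, inv_pow, inv_inv,
    abs_of_pos (by positivity), inv_mul_cancel₀ (by positivity), one_smul]

noncomputable def schwartzPartial (i : Fin n) (f : 𝓢(𝕍, ℂ)) : 𝓢(𝕍, ℂ) :=
  ∂_{EuclideanSpace.single i (1 : ℝ)} f

lemma ft_schwartzPartial (i : Fin n) (f : 𝓢(𝕍, ℂ)) (ξ : 𝕍) :
    ft ⇑(schwartzPartial i f) ξ = I * ξ i * ft f ξ := by
  rw [ft_eq_fourier, ft_eq_fourier, schwartzPartial, fourier_lineDerivOp_apply,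
    EuclideanSpace.inner_single_right]
  have hπ : (π : ℂ) ≠ 0 := Complex.ofReal_ne_zero.2 Real.pi_ne_zero
  simp only [PiLp.smul_apply, smul_eq_mul, one_mul, conj_trivial]
  push_cast
  field_simp

noncomputable def schwartzMDeriv (α : Fin n → ℕ) (f : 𝓢(𝕍, ℂ)) : 𝓢(𝕍, ℂ) :=
  (List.finRange n).foldr (fun i g => (schwartzPartial i)^[α i] g) f

lemma pd_iterate_coe (i : Fin n) (k : ℕ) (f : 𝓢(𝕍, ℂ)) :
    (pd i)^[k] ⇑f = ⇑((schwartzPartial i)^[k] f) :=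
  ((show Function.Semiconj (fun h : 𝓢(𝕍, ℂ) => ⇑h) (schwartzPartial i) (pd i) from
    fun _ => rfl).iterate_right k f).symm

lemma mderiv_coe (α : Fin n → ℕ) (f : 𝓢(𝕍, ℂ)) : mderiv α ⇑f = ⇑(schwartzMDeriv α f) :=
  List.foldr_hom _ fun i g => pd_iterate_coe i (α i) g

lemma ft_iterate_schwartzPartial (i : Fin n) (k : ℕ) (f : 𝓢(𝕍, ℂ)) (ξ : 𝕍) :
    ft ⇑((schwartzPartial i)^[k] f) ξ = (I * ξ i) ^ k * ft f ξ := by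
  induction k with
  | zero => simp
  | succ k ih => rw [Function.iterate_succ_apply', ft_schwartzPartial, ih, pow_succ]; ring

lemma ft_schwartzMDeriv (α : Fin n → ℕ) (f : 𝓢(𝕍, ℂ)) (ξ : 𝕍) :
    ft ⇑(schwartzMDeriv α f) ξ = (∏ i, (I * ξ i) ^ α i) * ft f ξ := by
  rw [schwartzMDeriv, Fin.prod_univ_def]
  induction List.finRange n with
  | nil => simp
  | cons i l ih =>
    rw [List.foldr_cons, List.map_cons, List.prod_cons, ft_iterate_schwartzPartial, ih,
      mul_assoc]

lemma ft_schwartzMDeriv_mul_conj (α : Fin n → ℕ) (f g : 𝓢(𝕍, ℂ)) (ξ : 𝕍) :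
    ft ⇑(schwartzMDeriv α f) ξ * conj (ft ⇑(schwartzMDeriv α g) ξ) =
      ((∏ i, (ξ i ^ 2) ^ α i : ℝ) : ℂ) * (ft f ξ * conj (ft g ξ)) := by
  rw [ft_schwartzMDeriv, ft_schwartzMDeriv, map_mul, mul_mul_mul_comm, Complex.mul_conj]
  simp [map_prod, Complex.normSq_mul, sq]

end EuclideanSpace

/-- `∫ (1+|ξ|²)^m û(ξ) conj(v̂(ξ)) dξ
  = Σ_{|α| ≤ m} C(m,|α|) (|α|!/α!) ∫ ∂^α u conj(∂^α v) dx` for Schwartz `u, v`. -/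
theorem integral_weight_mul_ft_mul_conj_ft_eq_sum_multinomial
    (n m : ℕ) (u v : SchwartzMap (EuclideanSpace ℝ (Fin n)) ℂ) :
    ∫ ξ, (((1 + ‖ξ‖ ^ 2) ^ m : ℝ) : ℂ) * (ft (⇑u) ξ * (starRingEnd ℂ) (ft (⇑v) ξ)) =
      ∑ α ∈ (Fintype.piFinset fun _ : Fin n => Finset.range (m + 1)).filter
          (fun α => ∑ i, α i ≤ m),
        ((m.choose (∑ i, α i) * Nat.multinomial Finset.univ α : ℕ) : ℂ) *
          ∫ x, mderiv α (⇑u) x * (starRingEnd ℂ) (mderiv α (⇑v) x) := by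
  simp_rw [mderiv_coe, ← integral_ft_mul_conj_ft, ← integral_const_mul]
  rw [← integral_finsetSum _ fun α _ => (integrable_ft_mul_conj_ft _ _).const_mul _]
  refine integral_congr_ae (.of_forall fun ξ => ?_)
  simp only [ft_schwartzMDeriv_mul_conj, EuclideanSpace.real_norm_sq_eq,
    one_add_sum_pow_eq_sum_multinomial]
  push_cast
  rw [Finset.sum_mul]
  exact Finset.sum_congr rfl fun α _ => by ring
end

section
/- Let α ∈ ℝ with 0 < α < 1/e, and for N ∈ ℕ₀ define S_N = (1/2) Σ_{k=0}^{2N} α^{2k} + Σ_{0 ≤ j < k ≤ 2N} (-α)^{j+k} e^{-(k-j)}. Then for every N ≥ 1, S_N - S_{N-1} = -(α^{4N-2} / (2(1+αe))) · ((1+α²)(1-αe) + 2(1-α/e)(αe)^{1-2N}), and this quantity is strictly negative; hence the sequence (S_N) is strictly decreasing. -/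
/-!
`S_N` is the quadratic form `½ Σ_{j,k} c_j c_k e^{-|k-j|}` in `c_k = (-α)^k` on `2N + 1` points.
Adding the points `2N` and `2N + 1` adds two diagonal terms and two rows of the off-diagonal
sum; each row is a geometric series in `-αe`, whence the closed form of the increment. Both
summands of its second factor are positive because `αe < 1` and `α/e < 1`.
-/

open Finset

lemma sum_range_product_filter_lt {M : Type*} [AddCommMonoid M] (n : ℕ) (f : ℕ → ℕ → M) :
    ∑ p ∈ (range n ×ˢ range n).filter (fun p => p.1 < p.2), f p.1 p.2
      = ∑ k ∈ range n, ∑ j ∈ range k, f j k := by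
  rw [sum_filter, sum_product_right]
  refine sum_congr rfl fun k hk => ?_
  rw [← sum_filter]
  congr 1
  ext j
  simp only [mem_filter, mem_range]
  have := mem_range.mp hk
  omega

lemma sum_range_pow_add_mul_pow_sub_mul_sub {R : Type*} [CommRing R] (x ρ : R) (M : ℕ) :
    (∑ j ∈ range M, x ^ (j + M) * ρ ^ (M - j)) * (x - ρ) = x ^ M * ρ * (x ^ M - ρ ^ M) := by
  have hrow : ∑ j ∈ range M, x ^ (j + M) * ρ ^ (M - j)
      = x ^ M * ρ * ∑ j ∈ range M, x ^ j * ρ ^ (M - 1 - j) := by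
    rw [mul_sum]
    refine sum_congr rfl fun j hj => ?_
    rw [show M - j = M - 1 - j + 1 by have := mem_range.mp hj; omega]
    ring
  rw [hrow, mul_assoc, geom_sum₂_mul]

def expKernelEnergy {K : Type*} [Field K] (x ρ : K) (M : ℕ) : K :=
  (∑ k ∈ range M, x ^ (2 * k)) / 2 + ∑ k ∈ range M, ∑ j ∈ range k, x ^ (j + k) * ρ ^ (k - j)

section expKernelEnergy

variable {K : Type*} [Field K] (x ρ : K) (M : ℕ)

lemma expKernelEnergy_succ_sub :
    expKernelEnergy x ρ (M + 1) - expKernelEnergy x ρ M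
      = x ^ (2 * M) / 2 + ∑ j ∈ range M, x ^ (j + M) * ρ ^ (M - j) := by
  simp only [expKernelEnergy, sum_range_succ]
  ring

lemma expKernelEnergy_add_two_sub {x ρ : K} (h : x ≠ ρ) :
    expKernelEnergy x ρ (M + 2) - expKernelEnergy x ρ M
      = x ^ (2 * M) * (1 + x ^ 2) / 2
        + ρ * (x ^ M * (x ^ M - ρ ^ M) + x ^ (M + 1) * (x ^ (M + 1) - ρ ^ (M + 1))) / (x - ρ) := by
  have hsub : x - ρ ≠ 0 := sub_ne_zero.mpr h
  have hrow (m : ℕ) :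
      ∑ j ∈ range m, x ^ (j + m) * ρ ^ (m - j) = x ^ m * ρ * (x ^ m - ρ ^ m) / (x - ρ) :=
    eq_div_of_mul_eq hsub (sum_range_pow_add_mul_pow_sub_mul_sub x ρ m)
  have h2 := expKernelEnergy_succ_sub x ρ M
  have h1 := expKernelEnergy_succ_sub x ρ (M + 1)
  rw [hrow] at h1 h2
  rw [show expKernelEnergy x ρ (M + 2) - expKernelEnergy x ρ M
      = (expKernelEnergy x ρ (M + 1 + 1) - expKernelEnergy x ρ (M + 1))
        + (expKernelEnergy x ρ (M + 1) - expKernelEnergy x ρ M) by ring, h1, h2]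
  field_simp
  ring

end expKernelEnergy

lemma expKernelEnergy_neg_inv_odd_succ_sub {α c : ℝ} (hα : 0 < α) (hc : 0 < c) (n : ℕ) :
    expKernelEnergy (-α) c⁻¹ (2 * (n + 1) + 1) - expKernelEnergy (-α) c⁻¹ (2 * n + 1)
      = -(α ^ (4 * n + 2) / (2 * (1 + α * c)))
        * ((1 + α ^ 2) * (1 - α * c) + 2 * (1 - α / c) * (α * c) ^ (-(2 * n + 1 : ℤ))) := by
  have hne : -α ≠ c⁻¹ := (neg_neg_of_pos hα).trans (inv_pos.mpr hc) |>.ne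
  have hodd : (-α) ^ (2 * n + 1) = -α ^ (2 * n + 1) := Odd.neg_pow ⟨n, rfl⟩ α
  rw [show 2 * (n + 1) + 1 = 2 * n + 1 + 2 by ring, expKernelEnergy_add_two_sub _ hne,
    pow_succ _ (2 * n + 1), pow_mul, hodd, show 4 * n + 2 = 2 * (2 * n + 1) by ring, pow_mul,
    zpow_neg, show (2 * n + 1 : ℤ) = (2 * n + 1 : ℕ) by push_cast; ring, zpow_natCast, mul_pow,
    inv_pow, inv_pow]
  have := (pow_pos hα (2 * n + 1)).ne'
  have := (pow_pos hc (2 * n + 1)).ne'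
  have hαc : 0 < α * c := mul_pos hα hc
  have : 1 + α * c ≠ 0 := by linarith
  have : -(α * c) - 1 ≠ 0 := by linarith
  field_simp
  ring

lemma Real.exp_neg_natCast_sub_natCast {j k : ℕ} (h : j ≤ k) :
    Real.exp (-((k : ℝ) - j)) = (Real.exp 1)⁻¹ ^ (k - j) := by
  rw [← Nat.cast_sub h, Real.exp_neg, inv_pow, Real.exp_one_pow]

/-- For `0 < α < 1/e` and `S_N = (1/2) Σ_{k=0}^{2N} α^{2k}
+ Σ_{0 ≤ j < k ≤ 2N} (-α)^{j+k} e^{-(k-j)}`, we have for every `N ≥ 1`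
`S_N - S_{N-1} = -(α^{4N-2}/(2(1+αe))) ((1+α²)(1-αe) + 2(1-α/e)(αe)^{1-2N}) < 0`,
and hence `S` is strictly decreasing. -/
theorem normSq_Hneg1_alternating_deltas_strictAnti
    (α : ℝ) (hα0 : 0 < α) (hα1 : α < 1 / Real.exp 1)
    (S : ℕ → ℝ)
    (hS : ∀ N : ℕ, S N = (1 / 2) * (∑ k ∈ Finset.range (2 * N + 1), α ^ (2 * k))
        + ∑ p ∈ (Finset.range (2 * N + 1) ×ˢ Finset.range (2 * N + 1)).filter
            (fun p => p.1 < p.2),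
          (-α) ^ (p.1 + p.2) * Real.exp (-((p.2 : ℝ) - (p.1 : ℝ)))) :
    (∀ N : ℕ, 1 ≤ N →
      S N - S (N - 1)
          = -(α ^ (4 * N - 2) / (2 * (1 + α * Real.exp 1)))
            * ((1 + α ^ 2) * (1 - α * Real.exp 1)
              + 2 * (1 - α / Real.exp 1) * (α * Real.exp 1) ^ (1 - 2 * (N : ℤ)))
        ∧ S N - S (N - 1) < 0)
    ∧ StrictAnti S := by
  set e := Real.exp 1
  have he : 1 < e := Real.one_lt_exp_iff.mpr one_pos
  have hαe : α * e < 1 := by rwa [lt_div_iff₀ (by positivity)] at hα1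
  have hα_div : α / e < 1 := by rw [div_lt_one (by positivity)]; nlinarith
  have hS_energy (N : ℕ) : S N = expKernelEnergy (-α) e⁻¹ (2 * N + 1) := by
    rw [hS, sum_range_product_filter_lt _ fun j k => (-α) ^ (j + k) * Real.exp (-((k : ℝ) - j)),
      expKernelEnergy, one_div_mul_eq_div]
    congr 1
    · congr 1
      exact sum_congr rfl fun k _ => ((even_two_mul k).neg_pow α).symm
    · refine sum_congr rfl fun k _ => sum_congr rfl fun j hj => ?_
      rw [Real.exp_neg_natCast_sub_natCast (mem_range.mp hj).le]
  have hstep (n : ℕ) : S (n + 1) - S n = -(α ^ (4 * n + 2) / (2 * (1 + α * e)))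
      * ((1 + α ^ 2) * (1 - α * e) + 2 * (1 - α / e) * (α * e) ^ (-(2 * n + 1 : ℤ))) := by
    rw [hS_energy, hS_energy]
    exact expKernelEnergy_neg_inv_odd_succ_sub hα0 (by positivity) n
  have hneg (n : ℕ) : S (n + 1) - S n < 0 := by
    rw [hstep]
    refine mul_neg_of_neg_of_pos (neg_neg_of_pos (by positivity)) (add_pos ?_ ?_)
    · exact mul_pos (by positivity) (sub_pos.mpr hαe)
    · exact mul_pos (mul_pos two_pos (sub_pos.mpr hα_div)) (zpow_pos (by positivity) _)
  refine ⟨fun N hN => ?_, strictAnti_nat_of_succ_lt fun n => sub_neg.mp (hneg n)⟩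
  obtain ⟨n, rfl⟩ := Nat.exists_eq_add_of_le' hN
  rw [Nat.add_sub_cancel, show 4 * (n + 1) - 2 = 4 * n + 2 by omega,
    show 1 - 2 * ((n + 1 : ℕ) : ℤ) = -(2 * n + 1) by push_cast; ring]
  exact ⟨hstep n, hneg n⟩
end
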